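/- Let U, X be jointly distributed finite random variables, let Y = f(X) for a deterministic function f, let S ~ Bernoulli(p) be independent of (U, X), and set Z = X if S = 0 and Z = ? if S = 1 (with U–X–(Y,Z) a Markov chain). Then I(X; Y, Z | U) + I(U; Z) = H(Y) − p·I(U; Y) + (1−p)·H(X | Y). -/

import Mathlib

/-!
The erased observation `Z` is `S`-switched between the constant `?` and `X`, and the two branches
have disjoint ranges. As `S` is independent of `(U, X)`, every joint entropy of `Z` with functions
of `(U, X)` splits as `H(S) + p·H(branch at S = 1) + (1 - p)·H(branch at S = 0)`, the branch
entropies being those of `U`, `(U, Y)`, `X` or `(U, X)` up to injective relabelling. Together with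
`H(X, Y) = H(X)`, both sides then reduce to `p·H(U, Y) - p·H(U) + (1 - p)·H(X)`.
-/

open Finset
open scoped Classical

noncomputable section

/-- Probability that the random variable `X` takes the value `a`, under the
probability mass function `μ` on the finite sample space `Ω`. -/
def pr {Ω α : Type*} [Fintype Ω] (μ : Ω → ℝ) (X : Ω → α) (a : α) : ℝ :=
  ∑ ω, if X ω = a then μ ω else 0

/-- `μ` is a probability mass function. -/
def IsPMF {Ω : Type*} [Fintype Ω] (μ : Ω → ℝ) : Prop :=
  (∀ ω, 0 ≤ μ ω) ∧ ∑ ω, μ ω = 1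

/-- Shannon entropy (base 2) of a finite random variable. -/
def ent {Ω α : Type*} [Fintype Ω] [Fintype α] (μ : Ω → ℝ) (X : Ω → α) : ℝ :=
  -∑ a, pr μ X a * Real.logb 2 (pr μ X a)

/-- Mutual information `I(X;Y)` (base 2). -/
def mi {Ω α β : Type*} [Fintype Ω] [Fintype α] [Fintype β]
    (μ : Ω → ℝ) (X : Ω → α) (Y : Ω → β) : ℝ :=
  ent μ X + ent μ Y - ent μ (fun ω => (X ω, Y ω))

/-- Conditional entropy `H(X|Y)` (base 2). -/
def cent {Ω α β : Type*} [Fintype Ω] [Fintype α] [Fintype β]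
    (μ : Ω → ℝ) (X : Ω → α) (Y : Ω → β) : ℝ :=
  ent μ (fun ω => (X ω, Y ω)) - ent μ Y

/-- Conditional mutual information `I(X;Y|Z)` (base 2). -/
def cmi {Ω α β γ : Type*} [Fintype Ω] [Fintype α] [Fintype β] [Fintype γ]
    (μ : Ω → ℝ) (X : Ω → α) (Y : Ω → β) (Z : Ω → γ) : ℝ :=
  ent μ (fun ω => (X ω, Z ω)) + ent μ (fun ω => (Y ω, Z ω))
    - ent μ (fun ω => (X ω, Y ω, Z ω)) - ent μ Z

/-- Independence of two finite random variables. -/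
def IndepRV {Ω α β : Type*} [Fintype Ω] (μ : Ω → ℝ) (X : Ω → α) (Y : Ω → β) : Prop :=
  ∀ a b, pr μ (fun ω => (X ω, Y ω)) (a, b) = pr μ X a * pr μ Y b

section

variable {Ω α β γ δ : Type*} [Fintype Ω] {μ : Ω → ℝ}

theorem pr_eq_zero_of_forall_ne {X : Ω → α} {a : α} (h : ∀ ω, X ω ≠ a) : pr μ X a = 0 :=
  Finset.sum_eq_zero fun ω _ => if_neg (h ω)

theorem sum_pr [Fintype α] (X : Ω → α) : ∑ a, pr μ X a = ∑ ω, μ ω := by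
  unfold pr
  rw [Finset.sum_comm]
  simp

theorem pr_comp [Fintype α] (X : Ω → α) (g : α → β) (b : β) :
    pr μ (fun ω => g (X ω)) b = ∑ a with g a = b, pr μ X a := by
  rw [Finset.sum_filter]
  unfold pr
  calc ∑ ω, (if g (X ω) = b then μ ω else 0)
      = ∑ ω, ∑ a, if X ω = a then (if g a = b then μ ω else 0) else 0 := by simp
    _ = _ := by
      rw [Finset.sum_comm]
      refine Finset.sum_congr rfl fun a _ => ?_
      split_ifs <;> simp [*]

theorem pr_comp_of_injective (X : Ω → α) {g : α → β} (hg : g.Injective) (a : α) :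
    pr μ (fun ω => g (X ω)) (g a) = pr μ X a := by
  simp only [pr, hg.eq_iff]

theorem IndepRV.comp [Fintype α] [Fintype β] {X : Ω → α} {Y : Ω → β} (h : IndepRV μ X Y)
    (g : β → δ) : IndepRV μ X (fun ω => g (Y ω)) := by
  intro a b
  rw [pr_comp (fun ω => (X ω, Y ω)) (fun p => (p.1, g p.2)), pr_comp Y g, Finset.mul_sum]
  simp [Finset.sum_filter, Fintype.sum_prod_type, Prod.ext_iff, ite_and, h a]

theorem ent_eq_sum_negMulLog [Fintype α] (X : Ω → α) :
    ent μ X = (∑ a, Real.negMulLog (pr μ X a)) / Real.log 2 := by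
  simp only [ent, Real.negMulLog, Real.logb, Finset.sum_div]
  rw [← Finset.sum_neg_distrib]
  congr 1 with a
  ring

theorem ent_comp_of_injective [Fintype α] [Fintype β] (X : Ω → α) {g : α → β}
    (hg : g.Injective) : ent μ (fun ω => g (X ω)) = ent μ X := by
  simp only [ent_eq_sum_negMulLog]
  congr 1
  rw [← Finset.sum_subset (Finset.subset_univ (Finset.univ.image g)), Finset.sum_image hg.injOn]
  · simp only [pr_comp_of_injective X hg]
  · intro b _ hb
    rw [pr_eq_zero_of_forall_ne fun ω h => hb (mem_image.2 ⟨X ω, mem_univ _, h⟩)]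
    exact Real.negMulLog_zero

theorem ent_const [Fintype α] (hμ : ∑ ω, μ ω = 1) (c : α) : ent μ (fun _ => c) = 0 := by
  simp [ent, pr, hμ]

section Switch

variable {S : Ω → Bool} {p : ℝ} {V W M : Ω → α}

theorem pr_false_eq_one_sub (hμ : ∑ ω, μ ω = 1) (hS : pr μ S true = p) :
    pr μ S false = 1 - p := by
  have h := sum_pr (μ := μ) S
  rw [Fintype.sum_bool, hS, hμ] at h
  linarith

theorem pr_eq_add_of_switch (hM : ∀ ω, M ω = if S ω then V ω else W ω) (a : α) :
    pr μ M a =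
      pr μ (fun ω => (S ω, V ω)) (true, a) + pr μ (fun ω => (S ω, W ω)) (false, a) := by
  simp only [pr, ← Finset.sum_add_distrib, hM]
  refine Finset.sum_congr rfl fun ω _ => ?_
  by_cases h : S ω <;> simp [h]

theorem ent_eq_of_switch [Fintype α] (hμ : ∑ ω, μ ω = 1) (hS : pr μ S true = p)
    (hV : IndepRV μ S V) (hW : IndepRV μ S W) (hVW : ∀ ω ω', V ω ≠ W ω')
    (hM : ∀ ω, M ω = if S ω then V ω else W ω) :
    ent μ M = ent μ S + p * ent μ V + (1 - p) * ent μ W := by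
  have hq := pr_false_eq_one_sub hμ hS
  have hpr (a : α) : pr μ M a = p * pr μ V a + (1 - p) * pr μ W a := by
    rw [pr_eq_add_of_switch hM, hV, hW, hS, hq]
  have hsplit (a : α) : Real.negMulLog (pr μ M a) =
      Real.negMulLog (p * pr μ V a) + Real.negMulLog ((1 - p) * pr μ W a) := by
    rw [hpr]
    by_cases ha : ∃ ω, V ω = a
    · obtain ⟨ω, rfl⟩ := ha
      simp [pr_eq_zero_of_forall_ne fun ω' => (hVW ω ω').symm]
    · push Not at ha
      simp [pr_eq_zero_of_forall_ne ha]
  simp only [ent_eq_sum_negMulLog, hsplit, Real.negMulLog_mul, Finset.sum_add_distrib,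
    ← Finset.sum_mul, ← Finset.mul_sum, sum_pr, hμ, Fintype.sum_bool, hS, hq]
  ring

end Switch

abbrev erasure (S : Ω → Bool) (X : Ω → β) : Ω → Option β :=
  fun ω => if S ω then none else some (X ω)

section Erasure

variable [Fintype α] [Fintype β] {S : Ω → Bool} {p : ℝ} {U : Ω → α} {X : Ω → β}

theorem ent_erasure (hμ : ∑ ω, μ ω = 1) (hS : pr μ S true = p) (hX : IndepRV μ S X) :
    ent μ (erasure S X) = ent μ S + (1 - p) * ent μ X := by
  rw [ent_eq_of_switch hμ hS (hX.comp fun _ => none) (hX.comp some) (by simp) (fun _ => rfl),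
    ent_const hμ, ent_comp_of_injective X (Option.some_injective β)]
  ring

theorem ent_prod_erasure (hμ : ∑ ω, μ ω = 1) (hS : pr μ S true = p)
    (hUX : IndepRV μ S (fun ω => (U ω, X ω))) :
    ent μ (fun ω => (U ω, erasure S X ω))
      = ent μ S + p * ent μ U + (1 - p) * ent μ (fun ω => (U ω, X ω)) := by
  rw [ent_eq_of_switch hμ hS (hUX.comp fun t => (t.1, none))
      (hUX.comp fun t => (t.1, some t.2)) (by simp) (fun _ => by split <;> rfl),
    ent_comp_of_injective U (g := fun u => (u, (none : Option β)))
      (fun _ _ h => by simp_all [Prod.ext_iff]),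
    ent_comp_of_injective (fun ω => (U ω, X ω)) (g := fun t => (t.1, some t.2))
      (fun _ _ h => by simp_all [Prod.ext_iff])]

theorem ent_comp_erasure_prod [Fintype γ] (hμ : ∑ ω, μ ω = 1) (hS : pr μ S true = p)
    (hUX : IndepRV μ S (fun ω => (U ω, X ω))) (g : β → γ) :
    ent μ (fun ω => ((g (X ω), erasure S X ω), U ω))
      = ent μ S + p * ent μ (fun ω => (U ω, g (X ω)))
        + (1 - p) * ent μ (fun ω => (U ω, X ω)) := by
  rw [ent_eq_of_switch hμ hS (hUX.comp fun t => ((g t.2, none), t.1))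
      (hUX.comp fun t => ((g t.2, some t.2), t.1)) (by simp) (fun _ => by split <;> rfl),
    ent_comp_of_injective (fun ω => (U ω, g (X ω)))
      (g := fun t => ((t.2, (none : Option β)), t.1))
      (fun _ _ h => by simp_all [Prod.ext_iff]),
    ent_comp_of_injective (fun ω => (U ω, X ω)) (g := fun t => ((g t.2, some t.2), t.1))
      (fun _ _ h => by simp_all [Prod.ext_iff])]

theorem ent_self_comp_erasure_prod [Fintype γ] (hμ : ∑ ω, μ ω = 1) (hS : pr μ S true = p)
    (hUX : IndepRV μ S (fun ω => (U ω, X ω))) (g : β → γ) :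
    ent μ (fun ω => (X ω, (g (X ω), erasure S X ω), U ω))
      = ent μ S + ent μ (fun ω => (U ω, X ω)) := by
  rw [ent_eq_of_switch hμ hS (hUX.comp fun t => (t.2, (g t.2, none), t.1))
      (hUX.comp fun t => (t.2, (g t.2, some t.2), t.1)) (by simp) (fun _ => by split <;> rfl),
    ent_comp_of_injective (fun ω => (U ω, X ω)) (g := fun t => (t.2, (g t.2, none), t.1))
      (fun _ _ h => by simp_all [Prod.ext_iff]),
    ent_comp_of_injective (fun ω => (U ω, X ω)) (g := fun t => (t.2, (g t.2, some t.2), t.1))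
      (fun _ _ h => by simp_all [Prod.ext_iff])]
  ring

end Erasure

end

theorem stmt14_general {Ω α β γ : Type*} [Fintype Ω] [Fintype α] [Fintype β] [Fintype γ]
    (μ : Ω → ℝ) (hμ : IsPMF μ) (U : Ω → α) (X : Ω → β) (Y : Ω → γ)
    (f : β → γ) (hf : ∀ ω, Y ω = f (X ω))
    (S : Ω → Bool) (p : ℝ) (hS : pr μ S true = p)
    (hindep : IndepRV μ S (fun ω => (U ω, X ω))) :
    cmi μ X
        (fun ω => (Y ω, if S ω then (none : Option β) else some (X ω))) U
      + mi μ U (fun ω => if S ω then (none : Option β) else some (X ω))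
      = ent μ Y - p * mi μ U Y + (1 - p) * cent μ X Y := by
  obtain rfl : Y = fun ω => f (X ω) := funext hf
  have hXU : ent μ (fun ω => (X ω, U ω)) = ent μ (fun ω => (U ω, X ω)) :=
    ent_comp_of_injective (fun ω => (U ω, X ω)) Prod.swap_injective
  have hXY : ent μ (fun ω => (X ω, f (X ω))) = ent μ X :=
    ent_comp_of_injective X (g := fun x => (x, f x)) fun _ _ h => congrArg Prod.fst h
  simp only [cmi, mi, cent]
  rw [hXU, hXY, ent_comp_erasure_prod hμ.2 hS hindep f,
    ent_self_comp_erasure_prod hμ.2 hS hindep f, ent_erasure hμ.2 hS (hindep.comp Prod.snd),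
    ent_prod_erasure hμ.2 hS hindep]
  ring

/-- If `Y = f(X)`, `S ~ Bernoulli(p)` is independent of `(U,X)`, and `Z` is the
erasure of `X` by `S`, then
`I(X;(Y,Z)|U) + I(U;Z) = H(Y) − p·I(U;Y) + (1−p)·H(X|Y)`. -/
theorem stmt14 {Ω α β γ : Type*} [Fintype Ω] [Fintype α] [Fintype β] [Fintype γ]
    (μ : Ω → ℝ) (hμ : IsPMF μ) (U : Ω → α) (X : Ω → β) (Y : Ω → γ)
    (f : β → γ) (hf : ∀ ω, Y ω = f (X ω))
    (S : Ω → Bool) (p : ℝ) (hp : p ∈ Set.Icc (0:ℝ) 1) (hS : pr μ S true = p)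
    (hindep : IndepRV μ S (fun ω => (U ω, X ω))) :
    cmi μ X
        (fun ω => (Y ω, if S ω then (none : Option β) else some (X ω))) U
      + mi μ U (fun ω => if S ω then (none : Option β) else some (X ω))
      = ent μ Y - p * mi μ U Y + (1 - p) * cent μ X Y :=
  stmt14_general μ hμ U X Y f hf S p hS hindep
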